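/- arXiv:1603.04726 — 4 statements merged into one kernel-verified Lean document; each statement's English description precedes it below -/
import Mathlib

section
/- Let A, S, Q be closed subspaces of a Hilbert space H with S*Q invertible. Define cos(Q,S) = inf_{v∈Q,‖v‖=1} ‖P_S v‖ and sin(A,S) = sup_{v∈A,‖v‖=1} ‖P_{S⊥} v‖, and assume cos(Q,S) > 0. Then for every f ∈ A, the reconstruction error ε = f − P_A E_{Q,S⊥} f satisfies ‖ε‖² ≤ (sin²(A,S)/cos²(Q,S)) ‖P_{Q⊥} f‖². -/
open ContinuousLinearMap

/-- The cosine of the angle between closed subspaces: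
`cos(U,V) = inf_{v ∈ U, ‖v‖ = 1} ‖P_V v‖`. -/
noncomputable def cosAngle {H : Type*} [NormedAddCommGroup H] [InnerProductSpace ℂ H]
    (U V : Submodule ℂ H) [Submodule.HasOrthogonalProjection V] : ℝ :=
  sInf {r | ∃ v ∈ U, ‖v‖ = 1 ∧ r = ‖(Submodule.orthogonalProjectionOnto V v : H)‖}

/-- The sine of the angle between closed subspaces:
`sin(U,V) = sup_{v ∈ U, ‖v‖ = 1} ‖P_{Vᗮ} v‖`. -/
noncomputable def sinAngle {H : Type*} [NormedAddCommGroup H] [InnerProductSpace ℂ H]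
    (U V : Submodule ℂ H) [Submodule.HasOrthogonalProjection Vᗮ] : ℝ :=
  sSup {r | ∃ v ∈ U, ‖v‖ = 1 ∧ r = ‖(Submodule.orthogonalProjectionOnto Vᗮ v : H)‖}

/-!
Write `g = E_{Q,Sᗮ} f ∈ Q` and `w = f - g`. Since `S* E_{Q,Sᗮ} = S*`, the vector `w` lies in `Sᗮ`,
and as `f ∈ A` the error is `ε = P_A w`, while `P_{Qᗮ} f = P_{Qᗮ} w`. Two angle estimates for
vectors of `Sᗮ` finish the proof:
* `‖P_A w‖ ≤ sin(A,S) ‖w‖`, by duality: `‖P_A w‖² = ⟪P_{Sᗮ} P_A w, w⟫ ≤ sin(A,S) ‖P_A w‖ ‖w‖`;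
* `cos(Q,S) ‖w‖ ≤ ‖P_{Qᗮ} w‖`, since by the same duality `‖P_Q w‖² ≤ (1 - cos²(Q,S)) ‖w‖²`.

Hence `‖ε‖ ≤ sin(A,S) ‖w‖ ≤ (sin(A,S) / cos(Q,S)) ‖P_{Qᗮ} f‖`.
-/

open Submodule

section RCLike

variable {𝕜 E : Type*} [RCLike 𝕜]

theorem exists_norm_eq_one_norm_apply_eq [NormedAddCommGroup E] [NormedSpace 𝕜 E]
    {F : Type*} [NormedAddCommGroup F] [NormedSpace 𝕜 F] (T : E →L[𝕜] F) {U : Submodule 𝕜 E}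
    {a : E} (ha : a ∈ U) (ha0 : a ≠ 0) :
    ∃ v ∈ U, ‖v‖ = 1 ∧ ‖T v‖ = ‖a‖⁻¹ * ‖T a‖ := by
  refine ⟨(‖a‖⁻¹ : 𝕜) • a, U.smul_mem _ ha, ?_, ?_⟩
  · rw [norm_smul, norm_inv, RCLike.norm_ofReal, abs_norm, inv_mul_cancel₀ (norm_ne_zero_iff.2 ha0)]
  · rw [map_smul, norm_smul, norm_inv, RCLike.norm_ofReal, abs_norm]

variable [NormedAddCommGroup E] [InnerProductSpace 𝕜 E]

/-- Duality: `‖P_W P_U‖ = ‖P_U P_W‖` since both projections are self-adjoint. -/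
theorem norm_starProjection_le_of_forall_mem (U W : Submodule 𝕜 E)
    [U.HasOrthogonalProjection] [W.HasOrthogonalProjection] {s : ℝ} (hs : 0 ≤ s)
    (hUW : ∀ a ∈ U, ‖W.starProjection a‖ ≤ s * ‖a‖) {w : E} (hw : w ∈ W) :
    ‖U.starProjection w‖ ≤ s * ‖w‖ := by
  set e := U.starProjection w
  rcases eq_or_ne e 0 with he | he
  · rw [he, norm_zero]; positivity
  have hsq : ‖e‖ * ‖e‖ ≤ ‖e‖ * (s * ‖w‖) := calc
    ‖e‖ * ‖e‖ = RCLike.re (inner 𝕜 (W.starProjection e) w) := by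
      rw [inner_starProjection_left_eq_right, starProjection_eq_self_iff.2 hw,
        re_inner_starProjection_eq_normSq, sq]
      rfl
    _ ≤ ‖W.starProjection e‖ * ‖w‖ := re_inner_le_norm _ _
    _ ≤ s * ‖e‖ * ‖w‖ := by gcongr; exact hUW e (starProjection_apply_mem U w)
    _ = ‖e‖ * (s * ‖w‖) := by ring
  exact le_of_mul_le_mul_left hsq (norm_pos_iff.2 he)

theorem sub_apply_mem_orthogonal_range_of_adjoint_comp_comp_eq_id [CompleteSpace E]
    {F : Type*} [NormedAddCommGroup F] [InnerProductSpace 𝕜 F] [CompleteSpace F]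
    {Qop Sop : F →L[𝕜] E} {B : F →L[𝕜] F}
    (hB : (adjoint Sop ∘L Qop) ∘L B = ContinuousLinearMap.id 𝕜 F) (f : E) :
    f - (Qop ∘L B ∘L adjoint Sop) f ∈ (LinearMap.range (Sop : F →ₗ[𝕜] E))ᗮ := by
  have hS : adjoint Sop (f - (Qop ∘L B ∘L adjoint Sop) f) = 0 := by
    rw [map_sub, sub_eq_zero]
    exact (congrArg (· (adjoint Sop f)) hB).symm
  rintro _ ⟨l, rfl⟩
  rw [ContinuousLinearMap.coe_coe, ← adjoint_inner_right, hS, inner_zero_right]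

end RCLike

section Angles

variable {H : Type*} [NormedAddCommGroup H] [InnerProductSpace ℂ H] (U V : Submodule ℂ H)

theorem cosAngle_nonneg [V.HasOrthogonalProjection] : 0 ≤ cosAngle U V :=
  Real.sInf_nonneg <| by rintro _ ⟨v, -, -, rfl⟩; positivity

theorem cosAngle_le [V.HasOrthogonalProjection] {v : H} (hv : v ∈ U) (hv1 : ‖v‖ = 1) :
    cosAngle U V ≤ ‖V.starProjection v‖ :=
  csInf_le ⟨0, by rintro _ ⟨v, -, -, rfl⟩; positivity⟩ ⟨v, hv, hv1, rfl⟩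

theorem cosAngle_le_one [V.HasOrthogonalProjection] : cosAngle U V ≤ 1 := by
  rcases Set.eq_empty_or_nonempty
      {r | ∃ v ∈ U, ‖v‖ = 1 ∧ r = ‖(V.orthogonalProjectionOnto v : H)‖} with h | ⟨_, v, hv, hv1, -⟩
  · rw [cosAngle, h, Real.sInf_empty]
    exact zero_le_one
  · exact (cosAngle_le U V hv hv1).trans (hv1 ▸ V.norm_starProjection_apply_le v)

theorem cosAngle_mul_norm_le [V.HasOrthogonalProjection] {a : H} (ha : a ∈ U) :
    cosAngle U V * ‖a‖ ≤ ‖V.starProjection a‖ := by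
  rcases eq_or_ne a 0 with rfl | ha0
  · simp
  obtain ⟨v, hv, hv1, hva⟩ := exists_norm_eq_one_norm_apply_eq V.starProjection ha ha0
  rw [mul_comm, ← le_inv_mul_iff₀ (norm_pos_iff.2 ha0), ← hva]
  exact cosAngle_le U V hv hv1

theorem sinAngle_nonneg [Vᗮ.HasOrthogonalProjection] : 0 ≤ sinAngle U V :=
  Real.sSup_nonneg <| by rintro _ ⟨v, -, -, rfl⟩; positivity

theorem le_sinAngle [Vᗮ.HasOrthogonalProjection] {v : H} (hv : v ∈ U) (hv1 : ‖v‖ = 1) :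
    ‖Vᗮ.starProjection v‖ ≤ sinAngle U V :=
  le_csSup ⟨1, by rintro _ ⟨v, -, hv1, rfl⟩; exact hv1 ▸ Vᗮ.norm_starProjection_apply_le v⟩
    ⟨v, hv, hv1, rfl⟩

theorem norm_starProjection_orthogonal_le_sinAngle_mul [Vᗮ.HasOrthogonalProjection] {a : H}
    (ha : a ∈ U) : ‖Vᗮ.starProjection a‖ ≤ sinAngle U V * ‖a‖ := by
  rcases eq_or_ne a 0 with rfl | ha0
  · simp
  obtain ⟨v, hv, hv1, hva⟩ := exists_norm_eq_one_norm_apply_eq Vᗮ.starProjection ha ha0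
  rw [mul_comm, ← inv_mul_le_iff₀ (norm_pos_iff.2 ha0), ← hva]
  exact le_sinAngle U V hv hv1

theorem norm_starProjection_orthogonal_le_sqrt_mul [V.HasOrthogonalProjection] {a : H}
    (ha : a ∈ U) : ‖Vᗮ.starProjection a‖ ≤ √(1 - cosAngle U V ^ 2) * ‖a‖ := by
  rw [← Real.sqrt_sq (norm_nonneg a), ← Real.sqrt_mul' _ (sq_nonneg _)]
  apply Real.le_sqrt_of_sq_le
  have hpyth := norm_sq_eq_add_norm_sq_starProjection a V
  have hcos : (cosAngle U V * ‖a‖) ^ 2 ≤ ‖V.starProjection a‖ ^ 2 := by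
    gcongr
    · exact mul_nonneg (cosAngle_nonneg U V) (norm_nonneg a)
    · exact cosAngle_mul_norm_le U V ha
  linarith [mul_pow (cosAngle U V) ‖a‖ 2]

/-- The angle between `Vᗮ` and `Uᗮ` is at most the angle between `U` and `V`. -/
theorem cosAngle_mul_norm_le_of_mem_orthogonal [U.HasOrthogonalProjection]
    [V.HasOrthogonalProjection] {w : H} (hw : w ∈ Vᗮ) :
    cosAngle U V * ‖w‖ ≤ ‖Uᗮ.starProjection w‖ := by
  have hc0 := cosAngle_nonneg U V
  have hc1 : 0 ≤ 1 - cosAngle U V ^ 2 := by nlinarith [cosAngle_le_one U V]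
  have hU : ‖U.starProjection w‖ ^ 2 ≤ (1 - cosAngle U V ^ 2) * ‖w‖ ^ 2 := by
    rw [← Real.sq_sqrt hc1, ← mul_pow]
    gcongr
    exact norm_starProjection_le_of_forall_mem U Vᗮ (Real.sqrt_nonneg _)
      (fun a ha ↦ norm_starProjection_orthogonal_le_sqrt_mul U V ha) hw
  have hpyth := norm_sq_eq_add_norm_sq_starProjection w U
  rw [← pow_le_pow_iff_left₀ (by positivity) (norm_nonneg _) two_ne_zero]
  linarith [mul_pow (cosAngle U V) ‖w‖ 2]

end Angles

theorem spurs_error_bound_first_general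
    {H L : Type*} [NormedAddCommGroup H] [InnerProductSpace ℂ H] [CompleteSpace H]
    [NormedAddCommGroup L] [InnerProductSpace ℂ L] [CompleteSpace L]
    (Qop Sop : L →L[ℂ] H) (B : L →L[ℂ] L)
    (hB₂ : (adjoint Sop ∘L Qop) ∘L B = ContinuousLinearMap.id ℂ L)
    (As Ss Qs : Submodule ℂ H)
    [Submodule.HasOrthogonalProjection As] [Submodule.HasOrthogonalProjection Ss] [Submodule.HasOrthogonalProjection Qs]
    (hQs : LinearMap.range (Qop : L →ₗ[ℂ] H) = Qs) (hSs : LinearMap.range (Sop : L →ₗ[ℂ] H) = Ss)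
    (hcos : 0 < cosAngle Qs Ss)
    (f : H) (hf : f ∈ As) :
    ‖f - ((Submodule.orthogonalProjectionOnto As) ((Qop ∘L B ∘L adjoint Sop) f) : H)‖ ^ 2 ≤
      (sinAngle As Ss ^ 2 / cosAngle Qs Ss ^ 2) * ‖(Submodule.orthogonalProjectionOnto Qsᗮ f : H)‖ ^ 2 := by
  set g := (Qop ∘L B ∘L adjoint Sop) f
  set w := f - g
  have hg : g ∈ Qs := hQs ▸ LinearMap.mem_range_self _ _
  have hw : w ∈ Ssᗮ := hSs ▸ sub_apply_mem_orthogonal_range_of_adjoint_comp_comp_eq_id hB₂ f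
  have herr : f - As.starProjection g = As.starProjection w := by
    rw [map_sub, starProjection_eq_self_iff.2 hf]
  have hres : Qsᗮ.starProjection f = Qsᗮ.starProjection w := by
    rw [map_sub, (Qsᗮ.starProjection_apply_eq_zero_iff).2 (Qs.le_orthogonal_orthogonal hg), sub_zero]
  have hsin : ‖As.starProjection w‖ ≤ sinAngle As Ss * ‖w‖ :=
    norm_starProjection_le_of_forall_mem As Ssᗮ (sinAngle_nonneg As Ss)
      (fun a ha ↦ norm_starProjection_orthogonal_le_sinAngle_mul As Ss ha) hw
  have hcos_w := cosAngle_mul_norm_le_of_mem_orthogonal Qs Ss hw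
  change ‖f - As.starProjection g‖ ^ 2 ≤ _ * ‖Qsᗮ.starProjection f‖ ^ 2
  rw [herr, hres]
  calc ‖As.starProjection w‖ ^ 2 ≤ (sinAngle As Ss * ‖w‖) ^ 2 := by gcongr
    _ = sinAngle As Ss ^ 2 / cosAngle Qs Ss ^ 2 * (cosAngle Qs Ss * ‖w‖) ^ 2 := by
      field_simp
    _ ≤ sinAngle As Ss ^ 2 / cosAngle Qs Ss ^ 2 * ‖Qsᗮ.starProjection w‖ ^ 2 := by gcongr

/-- First SPURS error bound: for `f` in the signal subspace `As`,
`‖f − P_A E_{Q,Sᗮ} f‖² ≤ (sin²(A,S)/cos²(Q,S)) ‖P_{Qᗮ} f‖²`, where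
`E_{Q,Sᗮ} = Q (S*Q)⁻¹ S*` is built from the synthesis operators `Qop`, `Sop` whose ranges
are the subspaces `Qs` and `Ss`, and `cos(Q,S) > 0`. -/
theorem spurs_error_bound_first
    {H L : Type*} [NormedAddCommGroup H] [InnerProductSpace ℂ H] [CompleteSpace H]
    [NormedAddCommGroup L] [InnerProductSpace ℂ L] [CompleteSpace L]
    (Qop Sop : L →L[ℂ] H) (B : L →L[ℂ] L)
    (hB₁ : B ∘L (adjoint Sop ∘L Qop) = ContinuousLinearMap.id ℂ L)
    (hB₂ : (adjoint Sop ∘L Qop) ∘L B = ContinuousLinearMap.id ℂ L)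
    (As Ss Qs : Submodule ℂ H)
    [Submodule.HasOrthogonalProjection As] [Submodule.HasOrthogonalProjection Ss] [Submodule.HasOrthogonalProjection Qs]
    (hQs : LinearMap.range (Qop : L →ₗ[ℂ] H) = Qs) (hSs : LinearMap.range (Sop : L →ₗ[ℂ] H) = Ss)
    (hcos : 0 < cosAngle Qs Ss)
    (f : H) (hf : f ∈ As) :
    ‖f - ((Submodule.orthogonalProjectionOnto As) ((Qop ∘L B ∘L adjoint Sop) f) : H)‖ ^ 2 ≤
      (sinAngle As Ss ^ 2 / cosAngle Qs Ss ^ 2) * ‖(Submodule.orthogonalProjectionOnto Qsᗮ f : H)‖ ^ 2 :=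
  spurs_error_bound_first_general Qop Sop B hB₂ As Ss Qs hQs hSs hcos f hf
end

section
/- Under the same hypotheses, the SPURS reconstruction error satisfies the bound ‖f − P_A E_{Q,S⊥} f‖² ≤ (sin²(A,S)·sin²(A,Q)/cos²(Q,S)) ‖f‖² for every f ∈ A. -/
/-! Write `E = Q B S*` and `w = f - E f`. Since `S* E = S*`, `w ∈ Sᗮ`, and since `f ∈ A` the
error is `P_A w`, of norm at most `sin(A,S) ‖w‖`. Since `E f ∈ Q`, `P_{Qᗮ} w = P_{Qᗮ} f`, of norm
at most `sin(A,Q) ‖f‖`. The two estimates are linked by `cos(Q,S) ‖w‖ ≤ ‖P_{Qᗮ} w‖` for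
`w ∈ Sᗮ`: writing `q = P_Q w`, one has `‖q‖² = ⟪P_{Sᗮ} q, w⟫ ≤ √(1 - cos²(Q,S)) ‖q‖ ‖w‖`. -/

open ContinuousLinearMap

namespace Submodule

variable {H : Type*} [NormedAddCommGroup H] [InnerProductSpace ℂ H]

lemma exists_norm_eq_one_norm_starProjection_eq (K : Submodule ℂ H) [K.HasOrthogonalProjection]
    {U : Submodule ℂ H} {v : H} (hv : v ∈ U) (hv0 : v ≠ 0) :
    ∃ u ∈ U, ‖u‖ = 1 ∧ ‖K.starProjection v‖ = ‖K.starProjection u‖ * ‖v‖ := by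
  have hnv : ‖v‖ ≠ 0 := norm_ne_zero_iff.2 hv0
  refine ⟨(‖v‖⁻¹ : ℂ) • v, U.smul_mem _ hv, ?_, ?_⟩
  · rw [norm_smul, norm_inv, Complex.norm_real, norm_norm, inv_mul_cancel₀ hnv]
  · rw [map_smul, norm_smul, norm_inv, Complex.norm_real, norm_norm, mul_comm ‖v‖⁻¹,
      inv_mul_cancel_right₀ hnv]

section Angles

variable (U V : Submodule ℂ H)

lemma cosAngle_nonneg [V.HasOrthogonalProjection] : 0 ≤ cosAngle U V :=
  Real.sInf_nonneg (by rintro _ ⟨_, _, _, rfl⟩; exact norm_nonneg _)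

lemma cosAngle_le_one [V.HasOrthogonalProjection] : cosAngle U V ≤ 1 := by
  rcases Set.eq_empty_or_nonempty
      {r | ∃ v ∈ U, ‖v‖ = 1 ∧ r = ‖(V.orthogonalProjectionOnto v : H)‖} with h | ⟨r, hr⟩
  · rw [cosAngle, h, Real.sInf_empty]
    exact zero_le_one
  · have hle : cosAngle U V ≤ r :=
      csInf_le ⟨0, by rintro _ ⟨_, _, _, rfl⟩; exact norm_nonneg _⟩ hr
    obtain ⟨v, -, hv1, rfl⟩ := hr
    exact hle.trans (hv1 ▸ V.norm_starProjection_apply_le v)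

lemma sinAngle_nonneg [Vᗮ.HasOrthogonalProjection] : 0 ≤ sinAngle U V :=
  Real.sSup_nonneg (by rintro _ ⟨_, _, _, rfl⟩; exact norm_nonneg _)

variable {U V}

lemma cosAngle_mul_norm_le_norm_starProjection [V.HasOrthogonalProjection] {v : H} (hv : v ∈ U) :
    cosAngle U V * ‖v‖ ≤ ‖V.starProjection v‖ := by
  rcases eq_or_ne v 0 with rfl | hv0
  · simp
  obtain ⟨u, hu, hu1, huv⟩ := V.exists_norm_eq_one_norm_starProjection_eq hv hv0
  rw [huv]
  gcongr
  exact csInf_le ⟨0, by rintro _ ⟨_, _, _, rfl⟩; exact norm_nonneg _⟩ ⟨u, hu, hu1, rfl⟩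

lemma norm_starProjection_orthogonal_le_sinAngle_mul [Vᗮ.HasOrthogonalProjection] {v : H}
    (hv : v ∈ U) : ‖Vᗮ.starProjection v‖ ≤ sinAngle U V * ‖v‖ := by
  rcases eq_or_ne v 0 with rfl | hv0
  · simp
  obtain ⟨u, hu, hu1, huv⟩ := Vᗮ.exists_norm_eq_one_norm_starProjection_eq hv hv0
  rw [huv]
  gcongr
  refine le_csSup ⟨1, ?_⟩ ⟨u, hu, hu1, rfl⟩
  rintro _ ⟨x, -, hx1, rfl⟩
  exact hx1 ▸ Vᗮ.norm_starProjection_apply_le x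

lemma norm_starProjection_orthogonal_sq_le [V.HasOrthogonalProjection] {v : H} (hv : v ∈ U) :
    ‖Vᗮ.starProjection v‖ ^ 2 ≤ (1 - cosAngle U V ^ 2) * ‖v‖ ^ 2 := by
  have hpyth := V.norm_sq_eq_add_norm_sq_starProjection v
  have hcos := pow_le_pow_left₀ (mul_nonneg (cosAngle_nonneg U V) (norm_nonneg v))
    (cosAngle_mul_norm_le_norm_starProjection hv) 2
  nlinarith

end Angles

variable {S : Submodule ℂ H} [S.HasOrthogonalProjection]

lemma norm_sq_starProjection_le_of_mem_orthogonal (K : Submodule ℂ H) [K.HasOrthogonalProjection]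
    {w : H} (hw : w ∈ Sᗮ) :
    ‖K.starProjection w‖ ^ 2 ≤ ‖Sᗮ.starProjection (K.starProjection w)‖ * ‖w‖ := by
  have hinner : ∀ x, inner ℂ x w = inner ℂ (Sᗮ.starProjection x) w := fun x => by
    rw [Sᗮ.inner_starProjection_left_eq_right, starProjection_eq_self_iff.2 hw]
  calc ‖K.starProjection w‖ ^ 2 = RCLike.re (inner ℂ (K.starProjection w) w) :=
        (K.re_inner_starProjection_eq_normSq w).symm
    _ = RCLike.re (inner ℂ (Sᗮ.starProjection (K.starProjection w)) w) := by rw [hinner]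
    _ ≤ ‖Sᗮ.starProjection (K.starProjection w)‖ * ‖w‖ :=
        (RCLike.re_le_norm _).trans (norm_inner_le_norm _ _)

lemma norm_starProjection_le_sinAngle_mul_of_mem_orthogonal (A : Submodule ℂ H)
    [A.HasOrthogonalProjection] {w : H} (hw : w ∈ Sᗮ) :
    ‖A.starProjection w‖ ≤ sinAngle A S * ‖w‖ := by
  have hsq := norm_sq_starProjection_le_of_mem_orthogonal A hw
  have hsin :=
    norm_starProjection_orthogonal_le_sinAngle_mul (V := S) (A.starProjection_apply_mem w)
  have hbound := mul_nonneg (sinAngle_nonneg A S) (norm_nonneg w)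
  nlinarith [norm_nonneg (A.starProjection w), norm_nonneg w]

lemma cosAngle_mul_norm_le_norm_starProjection_orthogonal (Q : Submodule ℂ H)
    [Q.HasOrthogonalProjection] {w : H} (hw : w ∈ Sᗮ) :
    cosAngle Q S * ‖w‖ ≤ ‖Qᗮ.starProjection w‖ := by
  set c := cosAngle Q S
  set q := Q.starProjection w
  have hq : ‖q‖ ^ 2 ≤ ‖Sᗮ.starProjection q‖ * ‖w‖ :=
    norm_sq_starProjection_le_of_mem_orthogonal Q hw
  have hSq : ‖Sᗮ.starProjection q‖ ^ 2 ≤ (1 - c ^ 2) * ‖q‖ ^ 2 :=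
    norm_starProjection_orthogonal_sq_le (Q.starProjection_apply_mem w)
  have hpyth : ‖w‖ ^ 2 = ‖q‖ ^ 2 + ‖Qᗮ.starProjection w‖ ^ 2 :=
    Q.norm_sq_eq_add_norm_sq_starProjection w
  have hc : 0 ≤ 1 - c ^ 2 := by nlinarith [cosAngle_nonneg Q S, cosAngle_le_one Q S]
  have hq_le : ‖q‖ ^ 2 ≤ (1 - c ^ 2) * ‖w‖ ^ 2 := by
    rcases (norm_nonneg q).eq_or_lt with hq0 | hq0
    · rw [← hq0]
      nlinarith [mul_nonneg hc (sq_nonneg ‖w‖)]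
    · have h4 : ‖q‖ ^ 2 * ‖q‖ ^ 2 ≤ ‖q‖ ^ 2 * ((1 - c ^ 2) * ‖w‖ ^ 2) := by
        nlinarith [pow_le_pow_left₀ (sq_nonneg ‖q‖) hq 2, sq_nonneg ‖w‖]
      exact le_of_mul_le_mul_left h4 (by positivity)
  refine (pow_le_pow_iff_left₀ (mul_nonneg (cosAngle_nonneg Q S) (norm_nonneg w))
    (norm_nonneg _) two_ne_zero).1 ?_
  nlinarith

end Submodule

lemma sub_comp_adjoint_apply_mem_orthogonal_range {H L : Type*}
    [NormedAddCommGroup H] [InnerProductSpace ℂ H] [CompleteSpace H]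
    [NormedAddCommGroup L] [InnerProductSpace ℂ L] [CompleteSpace L]
    {Qop Sop : L →L[ℂ] H} {B : L →L[ℂ] L}
    (hB : (adjoint Sop ∘L Qop) ∘L B = ContinuousLinearMap.id ℂ L) (x : H) :
    x - (Qop ∘L B ∘L adjoint Sop) x ∈ (LinearMap.range (Sop : L →ₗ[ℂ] H))ᗮ := by
  have hSx : adjoint Sop (x - (Qop ∘L B ∘L adjoint Sop) x) = 0 := by
    rw [map_sub, sub_eq_zero]
    exact (congrArg (· (adjoint Sop x)) hB).symm
  rintro _ ⟨y, rfl⟩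
  rw [ContinuousLinearMap.coe_coe, ← adjoint_inner_right, hSx, inner_zero_right]

theorem spurs_error_bound_second_general
    {H L : Type*} [NormedAddCommGroup H] [InnerProductSpace ℂ H] [CompleteSpace H]
    [NormedAddCommGroup L] [InnerProductSpace ℂ L] [CompleteSpace L]
    (Qop Sop : L →L[ℂ] H) (B : L →L[ℂ] L)
    (hB₂ : (adjoint Sop ∘L Qop) ∘L B = ContinuousLinearMap.id ℂ L)
    (As Ss Qs : Submodule ℂ H)
    [Submodule.HasOrthogonalProjection As] [Submodule.HasOrthogonalProjection Ss] [Submodule.HasOrthogonalProjection Qs]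
    (hQs : LinearMap.range (Qop : L →ₗ[ℂ] H) = Qs) (hSs : LinearMap.range (Sop : L →ₗ[ℂ] H) = Ss)
    (hcos : 0 < cosAngle Qs Ss)
    (f : H) (hf : f ∈ As) :
    ‖f - ((Submodule.orthogonalProjectionOnto As) ((Qop ∘L B ∘L adjoint Sop) f) : H)‖ ^ 2 ≤
      (sinAngle As Ss ^ 2 * sinAngle As Qs ^ 2 / cosAngle Qs Ss ^ 2) * ‖f‖ ^ 2 := by
  set w := f - (Qop ∘L B ∘L adjoint Sop) f
  have hw : w ∈ Ssᗮ := hSs ▸ sub_comp_adjoint_apply_mem_orthogonal_range hB₂ f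
  have hEf : (Qop ∘L B ∘L adjoint Sop) f ∈ Qs := hQs ▸ LinearMap.mem_range_self _ _
  have herror : f - (As.orthogonalProjectionOnto ((Qop ∘L B ∘L adjoint Sop) f) : H)
      = As.starProjection w := by
    rw [map_sub, Submodule.starProjection_eq_self_iff.2 hf, Submodule.starProjection_apply]
  have hPw : Qsᗮ.starProjection w = Qsᗮ.starProjection f := by
    rw [map_sub, Submodule.starProjection_orthogonal_apply_eq_zero hEf, sub_zero]
  have hA := Submodule.norm_starProjection_le_sinAngle_mul_of_mem_orthogonal As hw
  have hQ := Submodule.cosAngle_mul_norm_le_norm_starProjection_orthogonal Qs hw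
  have hf' := Submodule.norm_starProjection_orthogonal_le_sinAngle_mul (V := Qs) hf
  have key : cosAngle Qs Ss * ‖As.starProjection w‖ ≤ sinAngle As Ss * sinAngle As Qs * ‖f‖ := by
    calc cosAngle Qs Ss * ‖As.starProjection w‖ ≤ cosAngle Qs Ss * (sinAngle As Ss * ‖w‖) :=
          mul_le_mul_of_nonneg_left hA hcos.le
      _ = sinAngle As Ss * (cosAngle Qs Ss * ‖w‖) := by ring
      _ ≤ sinAngle As Ss * (sinAngle As Qs * ‖f‖) :=
          mul_le_mul_of_nonneg_left (hQ.trans (hPw ▸ hf')) (Submodule.sinAngle_nonneg As Ss)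
      _ = _ := by ring
  rw [herror, div_mul_eq_mul_div, le_div_iff₀ (by positivity)]
  convert pow_le_pow_left₀ (by positivity) key 2 using 1 <;> ring

/-- Second SPURS error bound (Proposition 1): for every `f` in the signal
subspace `As`, `‖f − P_A E_{Q,Sᗮ} f‖² ≤ (sin²(A,S)·sin²(A,Q)/cos²(Q,S)) ‖f‖²`. -/
theorem spurs_error_bound_second
    {H L : Type*} [NormedAddCommGroup H] [InnerProductSpace ℂ H] [CompleteSpace H]
    [NormedAddCommGroup L] [InnerProductSpace ℂ L] [CompleteSpace L]
    (Qop Sop : L →L[ℂ] H) (B : L →L[ℂ] L)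
    (hB₁ : B ∘L (adjoint Sop ∘L Qop) = ContinuousLinearMap.id ℂ L)
    (hB₂ : (adjoint Sop ∘L Qop) ∘L B = ContinuousLinearMap.id ℂ L)
    (As Ss Qs : Submodule ℂ H)
    [Submodule.HasOrthogonalProjection As] [Submodule.HasOrthogonalProjection Ss] [Submodule.HasOrthogonalProjection Qs]
    (hQs : LinearMap.range (Qop : L →ₗ[ℂ] H) = Qs) (hSs : LinearMap.range (Sop : L →ₗ[ℂ] H) = Ss)
    (hcos : 0 < cosAngle Qs Ss)
    (f : H) (hf : f ∈ As) :
    ‖f - ((Submodule.orthogonalProjectionOnto As) ((Qop ∘L B ∘L adjoint Sop) f) : H)‖ ^ 2 ≤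
      (sinAngle As Ss ^ 2 * sinAngle As Qs ^ 2 / cosAngle Qs Ss ^ 2) * ‖f‖ ^ 2 :=
  spurs_error_bound_second_general Qop Sop B hB₂ As Ss Qs hQs hSs hcos f hf
end

section
/- For any f in a Hilbert space and the oblique projection E_{S⊥,Q} onto S⊥ along Q, the bound ‖E_{S⊥,Q} f‖ ≤ ‖P_{Q⊥} f‖ / cos(S⊥, Q⊥) holds, provided cos(S⊥, Q⊥) > 0. -/
open ContinuousLinearMap

/-!
`E = I - Q (S*Q)⁻¹ S*` is annihilated by `S*`, so `E f ∈ Sᗮ`, and `E f - f ∈ range Q`, so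
`P_{Qᗮ} (E f) = P_{Qᗮ} f`. The definition of `cos(Sᗮ, Qᗮ)` as an infimum over unit vectors
of `Sᗮ` then gives `cos(Sᗮ, Qᗮ) ‖E f‖ ≤ ‖P_{Qᗮ} (E f)‖ = ‖P_{Qᗮ} f‖`.
-/

section CosAngle

variable {H : Type*} [NormedAddCommGroup H] [InnerProductSpace ℂ H]
  {U V : Submodule ℂ H} [V.HasOrthogonalProjection]

theorem cosAngle_le_norm_orthogonalProjectionOnto {v : H} (hv : v ∈ U) (hv₁ : ‖v‖ = 1) :
    cosAngle U V ≤ ‖(V.orthogonalProjectionOnto v : H)‖ :=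
  csInf_le ⟨0, by rintro r ⟨w, -, -, rfl⟩; exact norm_nonneg _⟩ ⟨v, hv, hv₁, rfl⟩

theorem cosAngle_mul_norm_le_s8 {v : H} (hv : v ∈ U) :
    cosAngle U V * ‖v‖ ≤ ‖(V.orthogonalProjectionOnto v : H)‖ := by
  rcases eq_or_ne v 0 with rfl | hv₀
  · simp
  have hpos : 0 < ‖v‖ := norm_pos_iff.2 hv₀
  have hunit := cosAngle_le_norm_orthogonalProjectionOnto (V := V)
    (U.smul_mem ((‖v‖ : ℂ)⁻¹) hv) (norm_smul_inv_norm hv₀)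
  rw [map_smul, Submodule.coe_smul, norm_smul, norm_inv, Complex.norm_real, norm_norm,
    ← div_eq_inv_mul, le_div_iff₀ hpos] at hunit
  exact hunit

theorem norm_le_div_cosAngle (hcos : 0 < cosAngle U V) {v : H} (hv : v ∈ U) :
    ‖v‖ ≤ ‖(V.orthogonalProjectionOnto v : H)‖ / cosAngle U V := by
  rw [le_div_iff₀ hcos, mul_comm]
  exact cosAngle_mul_norm_le_s8 hv

end CosAngle

theorem Submodule.orthogonalProjectionOnto_orthogonal_sub_of_mem {𝕜 H : Type*} [RCLike 𝕜]
    [NormedAddCommGroup H] [InnerProductSpace 𝕜 H] {K : Submodule 𝕜 H}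
    [K.HasOrthogonalProjection] (f : H) {y : H} (hy : y ∈ K) :
    Kᗮ.orthogonalProjectionOnto (f - y) = Kᗮ.orthogonalProjectionOnto f := by
  rw [map_sub, Kᗮ.orthogonalProjectionOnto_apply_of_mem_orthogonal
    (K.le_orthogonal_orthogonal hy), sub_zero]

section ObliqueProjection

variable {𝕜 H L : Type*} [RCLike 𝕜]
  [NormedAddCommGroup H] [InnerProductSpace 𝕜 H] [CompleteSpace H]
  [NormedAddCommGroup L] [InnerProductSpace 𝕜 L] [CompleteSpace L]
  {Qop Sop : L →L[𝕜] H} {B : L →L[𝕜] L}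

theorem adjoint_apply_obliqueProjection
    (hB : (adjoint Sop ∘L Qop) ∘L B = ContinuousLinearMap.id 𝕜 L) (f : H) :
    adjoint Sop ((ContinuousLinearMap.id 𝕜 H - Qop ∘L B ∘L adjoint Sop) f) = 0 := by
  have hinv : adjoint Sop (Qop (B (adjoint Sop f))) = adjoint Sop f := congr($hB (adjoint Sop f))
  rw [sub_apply, id_apply, map_sub, comp_apply, comp_apply, hinv, sub_self]

theorem obliqueProjection_apply_mem_orthogonal_range
    (hB : (adjoint Sop ∘L Qop) ∘L B = ContinuousLinearMap.id 𝕜 L) (f : H) :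
    (ContinuousLinearMap.id 𝕜 H - Qop ∘L B ∘L adjoint Sop) f ∈
      (LinearMap.range (Sop : L →ₗ[𝕜] H))ᗮ := by
  rw [Sop.orthogonal_range, LinearMap.mem_ker, coe_coe]
  exact adjoint_apply_obliqueProjection hB f

end ObliqueProjection

theorem oblique_projection_norm_bound_general
    {H L : Type*} [NormedAddCommGroup H] [InnerProductSpace ℂ H] [CompleteSpace H]
    [NormedAddCommGroup L] [InnerProductSpace ℂ L] [CompleteSpace L]
    (Qop Sop : L →L[ℂ] H) (B : L →L[ℂ] L)
    (hB₂ : (adjoint Sop ∘L Qop) ∘L B = ContinuousLinearMap.id ℂ L)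
    (Ss Qs : Submodule ℂ H)
    [Submodule.HasOrthogonalProjection Qs]
    (hQs : LinearMap.range (Qop : L →ₗ[ℂ] H) = Qs) (hSs : LinearMap.range (Sop : L →ₗ[ℂ] H) = Ss)
    (hcos : 0 < cosAngle Ssᗮ Qsᗮ)
    (f : H) :
    ‖(ContinuousLinearMap.id ℂ H - Qop ∘L B ∘L adjoint Sop) f‖ ≤
      ‖(Submodule.orthogonalProjectionOnto Qsᗮ f : H)‖ / cosAngle Ssᗮ Qsᗮ := by
  have hproj : Qsᗮ.orthogonalProjectionOnto
      ((ContinuousLinearMap.id ℂ H - Qop ∘L B ∘L adjoint Sop) f) =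
      Qsᗮ.orthogonalProjectionOnto f :=
    Submodule.orthogonalProjectionOnto_orthogonal_sub_of_mem f
      (hQs ▸ LinearMap.mem_range_self _ _)
  rw [← hproj]
  exact norm_le_div_cosAngle hcos (hSs ▸ obliqueProjection_apply_mem_orthogonal_range hB₂ f)

/-- For any `f` and the oblique projection `E_{Sᗮ,Q} = I − Q (S*Q)⁻¹ S*`
onto `Sᗮ` along `Q`: `‖E_{Sᗮ,Q} f‖ ≤ ‖P_{Qᗮ} f‖ / cos(Sᗮ, Qᗮ)`, provided
`cos(Sᗮ, Qᗮ) > 0`. -/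
theorem oblique_projection_norm_bound
    {H L : Type*} [NormedAddCommGroup H] [InnerProductSpace ℂ H] [CompleteSpace H]
    [NormedAddCommGroup L] [InnerProductSpace ℂ L] [CompleteSpace L]
    (Qop Sop : L →L[ℂ] H) (B : L →L[ℂ] L)
    (hB₁ : B ∘L (adjoint Sop ∘L Qop) = ContinuousLinearMap.id ℂ L)
    (hB₂ : (adjoint Sop ∘L Qop) ∘L B = ContinuousLinearMap.id ℂ L)
    (Ss Qs : Submodule ℂ H)
    [Submodule.HasOrthogonalProjection Ss] [Submodule.HasOrthogonalProjection Qs]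
    (hQs : LinearMap.range (Qop : L →ₗ[ℂ] H) = Qs) (hSs : LinearMap.range (Sop : L →ₗ[ℂ] H) = Ss)
    (hcos : 0 < cosAngle Ssᗮ Qsᗮ)
    (f : H) :
    ‖(ContinuousLinearMap.id ℂ H - Qop ∘L B ∘L adjoint Sop) f‖ ≤
      ‖(Submodule.orthogonalProjectionOnto Qsᗮ f : H)‖ / cosAngle Ssᗮ Qsᗮ :=
  oblique_projection_norm_bound_general Qop Sop B hB₂ Ss Qs hQs hSs hcos f
end

section
/- For closed subspaces U, V of a Hilbert space, sin(U,V) = sin(V⊥, U⊥), where sin(U,V) = sup over unit vectors u ∈ U of ‖P_{V⊥} u‖. -/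
/-!
`sin(U,V)` is the operator norm of `T = P_{Vᗮ} ∘ ι_U : U → Vᗮ`. The adjoint of `T` is
`P_U ∘ ι_{Vᗮ} = P_{Uᗮᗮ} ∘ ι_{Vᗮ}`, whose norm is `sin(Vᗮ, Uᗮ)`, and an operator and its adjoint
have the same norm.
-/

open Submodule ContinuousLinearMap

section

variable {𝕜 H : Type*} [RCLike 𝕜] [NormedAddCommGroup H] [InnerProductSpace 𝕜 H]

theorem Submodule.sSup_norm_orthogonalProjectionOnto_eq_norm_comp_subtypeL
    (W L : Submodule 𝕜 H) [L.HasOrthogonalProjection] :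
    sSup {r | ∃ v ∈ W, ‖v‖ = 1 ∧ r = ‖(L.orthogonalProjectionOnto v : H)‖} =
      ‖L.orthogonalProjectionOnto ∘L W.subtypeL‖ := by
  rw [← sSup_sphere_eq_norm]
  congr 1
  ext r
  constructor
  · rintro ⟨v, hv, hv1, rfl⟩
    exact ⟨⟨v, hv⟩, mem_sphere_zero_iff_norm.2 hv1, rfl⟩
  · rintro ⟨v, hv1, rfl⟩
    exact ⟨v, v.2, mem_sphere_zero_iff_norm.1 hv1, rfl⟩

theorem Submodule.adjoint_orthogonalProjectionOnto_comp_subtypeL [CompleteSpace H]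
    (U K : Submodule 𝕜 H) [CompleteSpace U] [CompleteSpace K] :
    adjoint (K.orthogonalProjectionOnto ∘L U.subtypeL) =
      U.orthogonalProjectionOnto ∘L K.subtypeL := by
  rw [adjoint_comp, adjoint_subtypeL, adjoint_orthogonalProjectionOnto]

end

/-- The equation `hK` lets `Vᗮ` be replaced by a propositionally equal subspace such as `Uᗮᗮ = U`,
which `rw` cannot do under the dependent instance. -/
theorem sinAngle_eq_norm_comp_subtypeL {H : Type*} [NormedAddCommGroup H]
    [InnerProductSpace ℂ H] (U V K : Submodule ℂ H) [Vᗮ.HasOrthogonalProjection]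
    [K.HasOrthogonalProjection] (hK : Vᗮ = K) :
    sinAngle U V = ‖K.orthogonalProjectionOnto ∘L U.subtypeL‖ := by
  subst hK
  exact U.sSup_norm_orthogonalProjectionOnto_eq_norm_comp_subtypeL Vᗮ

theorem sinAngle_orthogonal_symm_general
    {H : Type*} [NormedAddCommGroup H] [InnerProductSpace ℂ H] [CompleteSpace H]
    (U V : Submodule ℂ H) (hU : IsClosed (U : Set H))
    [Submodule.HasOrthogonalProjection U] :
    sinAngle U V = sinAngle Vᗮ Uᗮ := by
  have : CompleteSpace U := hU.completeSpace_coe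
  rw [sinAngle_eq_norm_comp_subtypeL U V Vᗮ rfl,
    sinAngle_eq_norm_comp_subtypeL Vᗮ Uᗮ U U.orthogonal_orthogonal,
    ← adjoint_orthogonalProjectionOnto_comp_subtypeL, LinearIsometryEquiv.norm_map]

/-- For closed subspaces `U`, `V` of a Hilbert space,
`sin(U,V) = sin(Vᗮ, Uᗮ)`. -/
theorem sinAngle_orthogonal_symm
    {H : Type*} [NormedAddCommGroup H] [InnerProductSpace ℂ H] [CompleteSpace H]
    (U V : Submodule ℂ H) (hU : IsClosed (U : Set H)) (hV : IsClosed (V : Set H))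
    [Submodule.HasOrthogonalProjection U] [Submodule.HasOrthogonalProjection V] :
    sinAngle U V = sinAngle Vᗮ Uᗮ :=
  sinAngle_orthogonal_symm_general U V hU
end
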